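/- Let {P_j}_{j∈ℕ} be a complete family of commuting orthogonal projections with P_jP_k = 0 for |j−k| ≥ M, and suppose each {P_j g_{jk} : k ∈ K} is a frame for P_j(H) with uniform bounds α, β and P_j g_{jk} = g_{jk}. Then {g_{jk}} is a frame for H with lower bound α·1 and upper bound β·M. -/

import Mathlib

/-!
Upper fusion bound: within a residue class mod `M` the projections are mutually orthogonal, so
Bessel's inequality bounds their contribution by `‖f‖²`, and there are `M` classes.
Lower fusion bound: `Qₙ = (1 - P_{n-1}) ⋯ (1 - P₀)` is a decreasing sequence of projections and
Pythagoras gives `‖f‖² ≤ ‖Qₙ f‖² + ∑_{j<n} ‖P_j f‖²`; the strong limit of `Qₙ f` is killed by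
every `P_j`, hence is `0` by completeness.
Finally `⟪f, g_{jk}⟫ = ⟪P_j f, g_{jk}⟫` because `g_{jk} ∈ range P_j`, so the local frame
inequalities for `P_j f`, summed over `j`, become the global ones.
-/

open scoped InnerProductSpace RealInnerProductSpace

open Filter Topology

namespace IsStarProjection

variable {R : Type*}

theorem sum [NonUnitalNonAssocSemiring R] [StarRing R] {ι : Type*} {p : ι → R}
    {s : Finset ι} (hp : ∀ i ∈ s, IsStarProjection (p i))
    (horth : ∀ i ∈ s, ∀ j ∈ s, i ≠ j → p i * p j = 0) :
    IsStarProjection (∑ i ∈ s, p i) := by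
  classical
  induction s using Finset.induction_on with
  | empty => rw [Finset.sum_empty]; exact IsStarProjection.zero R
  | insert a s ha ih =>
    rw [Finset.sum_insert ha]
    refine (hp a (Finset.mem_insert_self a s)).add
      (ih (fun i hi => hp i (Finset.mem_insert_of_mem hi))
        (fun i hi j hj => horth i (Finset.mem_insert_of_mem hi) j (Finset.mem_insert_of_mem hj)))
      ?_
    rw [Finset.mul_sum]
    refine Finset.sum_eq_zero fun j hj => horth a (Finset.mem_insert_self a s) j
      (Finset.mem_insert_of_mem hj) ?_
    rintro rfl
    exact ha hj

end IsStarProjection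

section ProdOneSub

variable {R : Type*} [Ring R]

/-- `prodOneSub p n = (1 - p (n - 1)) * ⋯ * (1 - p 0)`; for commuting star projections this is
the projection onto the common kernel of `p 0, …, p (n - 1)`. -/
def prodOneSub (p : ℕ → R) : ℕ → R
  | 0 => 1
  | n + 1 => (1 - p n) * prodOneSub p n

variable {p : ℕ → R}

theorem prodOneSub_zero : prodOneSub p 0 = 1 := rfl

theorem prodOneSub_succ (n : ℕ) : prodOneSub p (n + 1) = (1 - p n) * prodOneSub p n := rfl

theorem commute_prodOneSub (hp : ∀ i j, Commute (p i) (p j)) (j n : ℕ) :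
    Commute (p j) (prodOneSub p n) := by
  induction n with
  | zero => exact Commute.one_right _
  | succ n ih => exact ((Commute.one_right _).sub_right (hp j n)).mul_right ih

theorem mul_prodOneSub_eq_zero (hp : ∀ i j, Commute (p i) (p j))
    (hidem : ∀ j, IsIdempotentElem (p j)) {j n : ℕ} (hjn : j < n) :
    p j * prodOneSub p n = 0 := by
  induction n with
  | zero => omega
  | succ n ih =>
    rw [prodOneSub_succ, ← mul_assoc]
    rcases Nat.lt_succ_iff_lt_or_eq.mp hjn with h | rfl
    · rw [((Commute.one_right _).sub_right (hp j n)).eq, mul_assoc, ih h, mul_zero]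
    · rw [(hidem j).mul_one_sub_self, zero_mul]

theorem prodOneSub_mul_prodOneSub (hidem : ∀ n, IsIdempotentElem (prodOneSub p n))
    {m n : ℕ} (hmn : m ≤ n) : prodOneSub p n * prodOneSub p m = prodOneSub p n := by
  induction n, hmn using Nat.le_induction with
  | base => exact hidem m
  | succ n _ ih => rw [prodOneSub_succ, mul_assoc, ih]

theorem isStarProjection_prodOneSub [StarRing R] (hp : ∀ j, IsStarProjection (p j))
    (hcomm : ∀ i j, Commute (p i) (p j)) (n : ℕ) : IsStarProjection (prodOneSub p n) := by
  induction n with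
  | zero => exact IsStarProjection.one R
  | succ n ih =>
    exact (hp n).one_sub.mul ih ((Commute.one_left _).sub_left (commute_prodOneSub hcomm n n))

end ProdOneSub

namespace IsStarProjection

variable {𝕜 E : Type*} [RCLike 𝕜] [NormedAddCommGroup E] [InnerProductSpace 𝕜 E] [CompleteSpace E]
  {p : E →L[𝕜] E}

theorem norm_sq_apply (hp : IsStarProjection p) (x : E) : ‖p x‖ ^ 2 = RCLike.re ⟪p x, x⟫_𝕜 := by
  obtain ⟨K, _, rfl⟩ := isStarProjection_iff_eq_starProjection.mp hp
  rw [K.re_inner_starProjection_eq_normSq, Submodule.starProjection_apply, Submodule.coe_norm]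

theorem norm_sq_eq_norm_sq_apply_add (hp : IsStarProjection p) (x : E) :
    ‖x‖ ^ 2 = ‖p x‖ ^ 2 + ‖x - p x‖ ^ 2 := by
  obtain ⟨K, _, rfl⟩ := isStarProjection_iff_eq_starProjection.mp hp
  rw [← K.starProjection_orthogonal_val]
  exact K.norm_sq_eq_add_norm_sq_starProjection x

theorem norm_apply_le (hp : IsStarProjection p) (x : E) : ‖p x‖ ≤ ‖x‖ := by
  obtain ⟨K, _, rfl⟩ := isStarProjection_iff_eq_starProjection.mp hp
  exact K.norm_starProjection_apply_le x

theorem sum_norm_sq_apply_le {ι : Type*} {p : ι → E →L[𝕜] E} {s : Finset ι}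
    (hp : ∀ i ∈ s, IsStarProjection (p i)) (horth : ∀ i ∈ s, ∀ j ∈ s, i ≠ j → p i * p j = 0)
    (x : E) : ∑ i ∈ s, ‖p i x‖ ^ 2 ≤ ‖x‖ ^ 2 := by
  have hsum := IsStarProjection.sum hp horth
  calc ∑ i ∈ s, ‖p i x‖ ^ 2 = RCLike.re ⟪(∑ i ∈ s, p i) x, x⟫_𝕜 := by
        simp only [sum_apply, sum_inner, map_sum]
        exact Finset.sum_congr rfl fun i hi => (hp i hi).norm_sq_apply x
    _ = ‖(∑ i ∈ s, p i) x‖ ^ 2 := (hsum.norm_sq_apply x).symm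
    _ ≤ ‖x‖ ^ 2 := by gcongr; exact hsum.norm_apply_le x

theorem cauchySeq_apply {q : ℕ → E →L[𝕜] E} (hq : ∀ n, IsStarProjection (q n))
    (hanti : ∀ m n, m ≤ n → q n * q m = q n) (x : E) : CauchySeq fun n => q n x := by
  have hdist : ∀ m n, m ≤ n → ‖q m x - q n x‖ ^ 2 = ‖q m x‖ ^ 2 - ‖q n x‖ ^ 2 := by
    intro m n hmn
    have := (hq n).norm_sq_eq_norm_sq_apply_add (q m x)
    rw [← mul_apply_eq_comp, hanti m n hmn] at this
    linarith
  have hmono : Antitone fun n => ‖q n x‖ ^ 2 := by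
    refine antitone_nat_of_succ_le fun n => ?_
    have := hdist n (n + 1) n.le_succ
    nlinarith [sq_nonneg ‖q n x - q (n + 1) x‖]
  obtain ⟨ℓ, hℓ⟩ : ∃ ℓ, Tendsto (fun n => ‖q n x‖ ^ 2) atTop (𝓝 ℓ) :=
    ⟨_, tendsto_atTop_ciInf hmono ⟨0, by rintro _ ⟨n, rfl⟩; positivity⟩⟩
  refine cauchySeq_of_le_tendsto_0' (fun n => √(‖q n x‖ ^ 2 - ℓ)) (fun m n hmn => ?_) ?_
  · rw [dist_eq_norm, ← Real.sqrt_sq (norm_nonneg _), hdist m n hmn]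
    exact Real.sqrt_le_sqrt (by linarith [hmono.le_of_tendsto hℓ n])
  · simpa using ((hℓ.sub_const ℓ).sqrt)

end IsStarProjection

theorem Nat.ModEq.natCast_le_abs_sub {M j k : ℕ} (hjk : j ≠ k) (h : j ≡ k [MOD M]) :
    (M : ℤ) ≤ |(j : ℤ) - (k : ℤ)| :=
  Int.le_of_dvd (abs_pos.mpr (sub_ne_zero.mpr (by exact_mod_cast hjk)))
    ((dvd_abs _ _).mpr h.symm.dvd)

section FusionFrame

variable {𝕜 E : Type*} [RCLike 𝕜] [NormedAddCommGroup E] [InnerProductSpace 𝕜 E] [CompleteSpace E]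
  {P : ℕ → E →L[𝕜] E}

theorem sum_range_norm_sq_apply_le_mul (hP : ∀ j, IsStarProjection (P j)) {M : ℕ} (hM : 0 < M)
    (horth : ∀ j k : ℕ, (M : ℤ) ≤ |(j : ℤ) - (k : ℤ)| → P j * P k = 0) (x : E) (N : ℕ) :
    ∑ j ∈ Finset.range N, ‖P j x‖ ^ 2 ≤ M * ‖x‖ ^ 2 := by
  have hclass : ∀ r, ∑ j ∈ Finset.range N with j % M = r, ‖P j x‖ ^ 2 ≤ ‖x‖ ^ 2 := by
    refine fun r => IsStarProjection.sum_norm_sq_apply_le (fun j _ => hP j) ?_ x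
    intro j hj k hk hjk
    simp only [Finset.mem_filter] at hj hk
    exact horth j k (Nat.ModEq.natCast_le_abs_sub hjk (hj.2.trans hk.2.symm))
  calc ∑ j ∈ Finset.range N, ‖P j x‖ ^ 2
      = ∑ r ∈ Finset.range M, ∑ j ∈ Finset.range N with j % M = r, ‖P j x‖ ^ 2 :=
        (Finset.sum_fiberwise_of_maps_to (fun j _ => Finset.mem_range.mpr (Nat.mod_lt j hM)) _).symm
    _ ≤ ∑ _r ∈ Finset.range M, ‖x‖ ^ 2 := Finset.sum_le_sum fun r _ => hclass r
    _ = M * ‖x‖ ^ 2 := by rw [Finset.sum_const, Finset.card_range, nsmul_eq_mul]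

theorem norm_sq_le_norm_sq_prodOneSub_add_sum (hP : ∀ j, IsStarProjection (P j))
    (hcomm : ∀ i j, Commute (P i) (P j)) (x : E) (n : ℕ) :
    ‖x‖ ^ 2 ≤ ‖prodOneSub P n x‖ ^ 2 + ∑ j ∈ Finset.range n, ‖P j x‖ ^ 2 := by
  induction n with
  | zero => simp [prodOneSub_zero]
  | succ n ih =>
    have hpyth := (hP n).norm_sq_eq_norm_sq_apply_add (prodOneSub P n x)
    have hle : ‖P n (prodOneSub P n x)‖ ≤ ‖P n x‖ := by
      rw [← mul_apply_eq_comp, (commute_prodOneSub hcomm n n).eq, mul_apply_eq_comp]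
      exact (isStarProjection_prodOneSub hP hcomm n).norm_apply_le _
    rw [prodOneSub_succ, mul_apply_eq_comp, sub_apply, one_apply_eq_self, Finset.sum_range_succ]
    nlinarith [norm_nonneg (P n (prodOneSub P n x))]

theorem tendsto_prodOneSub_apply_zero (hP : ∀ j, IsStarProjection (P j))
    (hcomm : ∀ i j, Commute (P i) (P j)) (hcomplete : ∀ x, (∀ j, P j x = 0) → x = 0) (x : E) :
    Tendsto (fun n => prodOneSub P n x) atTop (𝓝 0) := by
  have hQ := isStarProjection_prodOneSub hP hcomm
  obtain ⟨L, hL⟩ := cauchySeq_tendsto_of_complete <| IsStarProjection.cauchySeq_apply hQ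
    (fun _ _ => prodOneSub_mul_prodOneSub fun n => (hQ n).isIdempotentElem) x
  suffices ∀ j, P j L = 0 by rwa [hcomplete L this] at hL
  intro j
  refine tendsto_nhds_unique (((P j).continuous.tendsto L).comp hL) (tendsto_const_nhds.congr' ?_)
  filter_upwards [eventually_gt_atTop j] with n hn
  rw [Function.comp_apply, ← mul_apply_eq_comp,
    mul_prodOneSub_eq_zero hcomm (fun j => (hP j).isIdempotentElem) hn, zero_apply]

theorem norm_sq_le_tsum_norm_sq_apply (hP : ∀ j, IsStarProjection (P j))
    (hcomm : ∀ i j, Commute (P i) (P j)) (hcomplete : ∀ x, (∀ j, P j x = 0) → x = 0) {x : E}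
    (hx : Summable fun j => ‖P j x‖ ^ 2) : ‖x‖ ^ 2 ≤ ∑' j, ‖P j x‖ ^ 2 := by
  have hlim : Tendsto (fun n => ‖prodOneSub P n x‖ ^ 2 + ∑' j, ‖P j x‖ ^ 2) atTop
      (𝓝 (∑' j, ‖P j x‖ ^ 2)) := by
    simpa using ((tendsto_prodOneSub_apply_zero hP hcomm hcomplete x).norm.pow 2).add_const _
  refine ge_of_tendsto' hlim fun n => (norm_sq_le_norm_sq_prodOneSub_add_sum hP hcomm x n).trans ?_
  gcongr
  exact hx.sum_le_tsum _ fun j _ => sq_nonneg _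

end FusionFrame

section LocalToGlobal

variable {H : Type*} [NormedAddCommGroup H] [InnerProductSpace ℝ H]

theorem summable_inner_sq_of_mul_norm_sq_le_tsum {K : Type*} {x : H} {v : K → H} {α : ℝ}
    (hα : 0 < α) (h : α * ‖x‖ ^ 2 ≤ ∑' k, ⟪x, v k⟫ ^ 2) : Summable fun k => ⟪x, v k⟫ ^ 2 := by
  by_contra hns
  rw [tsum_eq_zero_of_not_summable hns] at h
  have hx : x = 0 := by
    have : ‖x‖ ^ 2 ≤ 0 := nonpos_of_mul_nonpos_right h hα
    simpa using this
  exact hns (by simp [hx])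

theorem frame_bounds_of_fusion_frame_bounds [CompleteSpace H] {ι K : Type*} {P : ι → H →L[ℝ] H}
    (hP : ∀ j, IsSelfAdjoint (P j)) {g : ι → K → H} (hfix : ∀ j k, P j (g j k) = g j k)
    {α β A B : ℝ} (hα : 0 < α) (hβ : 0 ≤ β)
    (hlocal : ∀ j, ∀ x ∈ Set.range (P j),
      α * ‖x‖ ^ 2 ≤ ∑' k, ⟪x, g j k⟫ ^ 2 ∧ ∑' k, ⟪x, g j k⟫ ^ 2 ≤ β * ‖x‖ ^ 2)
    {f : H} (hf : Summable fun j => ‖P j f‖ ^ 2)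
    (hA : A * ‖f‖ ^ 2 ≤ ∑' j, ‖P j f‖ ^ 2) (hB : ∑' j, ‖P j f‖ ^ 2 ≤ B * ‖f‖ ^ 2) :
    α * A * ‖f‖ ^ 2 ≤ ∑' p : ι × K, ⟪f, g p.1 p.2⟫ ^ 2 ∧
      ∑' p : ι × K, ⟪f, g p.1 p.2⟫ ^ 2 ≤ β * B * ‖f‖ ^ 2 := by
  have hinner : ∀ j k, ⟪P j f, g j k⟫ = ⟪f, g j k⟫ := fun j k => by
    conv_rhs => rw [← hfix j k]
    exact (hP j).isSymmetric f (g j k)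
  have hbounds : ∀ j, α * ‖P j f‖ ^ 2 ≤ ∑' k, ⟪f, g j k⟫ ^ 2 ∧
      ∑' k, ⟪f, g j k⟫ ^ 2 ≤ β * ‖P j f‖ ^ 2 := by
    simpa only [hinner] using fun j => hlocal j (P j f) ⟨f, rfl⟩
  have hrow : ∀ j, Summable fun k => ⟪f, g j k⟫ ^ 2 := fun j => by
    have := summable_inner_sq_of_mul_norm_sq_le_tsum (x := P j f) (v := g j) hα
      (by simpa only [hinner] using (hbounds j).1)
    simpa only [hinner] using this
  have hsumm : Summable fun p : ι × K => ⟪f, g p.1 p.2⟫ ^ 2 :=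
    (summable_prod_of_nonneg fun _ => sq_nonneg _).mpr ⟨hrow, (hf.mul_left β).of_nonneg_of_le
      (fun j => tsum_nonneg fun _ => sq_nonneg _) fun j => (hbounds j).2⟩
  rw [hsumm.tsum_prod' hrow]
  constructor
  · calc α * A * ‖f‖ ^ 2 ≤ α * ∑' j, ‖P j f‖ ^ 2 := by rw [mul_assoc]; gcongr
      _ = ∑' j, α * ‖P j f‖ ^ 2 := tsum_mul_left.symm
      _ ≤ ∑' j, ∑' k, ⟪f, g j k⟫ ^ 2 :=
        (hf.mul_left α).tsum_le_tsum (fun j => (hbounds j).1) hsumm.prod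
  · calc ∑' j, ∑' k, ⟪f, g j k⟫ ^ 2 ≤ ∑' j, β * ‖P j f‖ ^ 2 :=
        hsumm.prod.tsum_le_tsum (fun j => (hbounds j).2) (hf.mul_left β)
      _ = β * ∑' j, ‖P j f‖ ^ 2 := tsum_mul_left
      _ ≤ β * B * ‖f‖ ^ 2 := by rw [mul_assoc]; gcongr

end LocalToGlobal

theorem stmt18_general {H : Type*} [NormedAddCommGroup H] [InnerProductSpace ℝ H] [CompleteSpace H]
    {K : Type*}
    (P : ℕ → H →L[ℝ] H) (hsa : ∀ j, IsSelfAdjoint (P j)) (hidem : ∀ j, IsIdempotentElem (P j))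
    (hcomm : ∀ j k, (P j) ∘L (P k) = (P k) ∘L (P j))
    (M : ℕ) (hM : 0 < M)
    (horth : ∀ j k : ℕ, (M : ℤ) ≤ |(j : ℤ) - (k : ℤ)| → (P j) ∘L (P k) = 0)
    (hcomplete : ∀ f : H, (∀ j, P j f = 0) → f = 0)
    (g : ℕ → K → H) (α β : ℝ) (hα : 0 < α) (hβ : 0 < β)
    (hlocal : ∀ j, ∀ f ∈ Set.range (P j),
      α * ‖f‖ ^ 2 ≤ ∑' k, ⟪f, P j (g j k)⟫ ^ 2 ∧ ∑' k, ⟪f, P j (g j k)⟫ ^ 2 ≤ β * ‖f‖ ^ 2)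
    (hfix : ∀ j k, P j (g j k) = g j k) :
    ∀ f : H,
      α * 1 * ‖f‖ ^ 2 ≤ ∑' p : ℕ × K, ⟪f, g p.1 p.2⟫ ^ 2 ∧
      ∑' p : ℕ × K, ⟪f, g p.1 p.2⟫ ^ 2 ≤ β * (M : ℝ) * ‖f‖ ^ 2 := by
  intro f
  have hP : ∀ j, IsStarProjection (P j) := fun j => ⟨hidem j, hsa j⟩
  have hpartial := sum_range_norm_sq_apply_le_mul hP hM horth f
  have hsummable : Summable fun j => ‖P j f‖ ^ 2 :=
    summable_of_sum_range_le (fun _ => sq_nonneg _) hpartial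
  refine frame_bounds_of_fusion_frame_bounds hsa hfix hα hβ.le (by simpa only [hfix] using hlocal)
    hsummable ?_ (hsummable.tsum_le_of_sum_range_le hpartial)
  rw [one_mul]
  exact norm_sq_le_tsum_norm_sq_apply hP hcomm hcomplete hsummable

theorem stmt18 {H : Type*} [NormedAddCommGroup H] [InnerProductSpace ℝ H] [CompleteSpace H]
    {K : Type*} [Countable K]
    (P : ℕ → H →L[ℝ] H) (hsa : ∀ j, IsSelfAdjoint (P j)) (hidem : ∀ j, IsIdempotentElem (P j))
    (hcomm : ∀ j k, (P j) ∘L (P k) = (P k) ∘L (P j))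
    (M : ℕ) (hM : 0 < M)
    (horth : ∀ j k : ℕ, (M : ℤ) ≤ |(j : ℤ) - (k : ℤ)| → (P j) ∘L (P k) = 0)
    (hcomplete : ∀ f : H, (∀ j, P j f = 0) → f = 0)
    (g : ℕ → K → H) (α β : ℝ) (hα : 0 < α) (hβ : 0 < β)
    (hlocal : ∀ j, ∀ f ∈ Set.range (P j),
      α * ‖f‖ ^ 2 ≤ ∑' k, ⟪f, P j (g j k)⟫ ^ 2 ∧ ∑' k, ⟪f, P j (g j k)⟫ ^ 2 ≤ β * ‖f‖ ^ 2)
    (hfix : ∀ j k, P j (g j k) = g j k) :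
    ∀ f : H,
      α * 1 * ‖f‖ ^ 2 ≤ ∑' p : ℕ × K, ⟪f, g p.1 p.2⟫ ^ 2 ∧
      ∑' p : ℕ × K, ⟪f, g p.1 p.2⟫ ^ 2 ≤ β * (M : ℝ) * ‖f‖ ^ 2 :=
  stmt18_general P hsa hidem hcomm M hM horth hcomplete g α β hα hβ hlocal hfix
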